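/- arXiv:1306.6082 — 3 statements merged into one kernel-verified Lean document; each statement's English description precedes it below -/
import Mathlib

section
/- Let (X, X°, ξ) = (X₁, X°₁, ξ₁) * (X₂, X°₂, ξ₂) be the algebraic free product of two vector spaces with specified state-vector, let p be the associated rank-one idempotent on X and φ_p the expectation on L(X). For T₁ ∈ L(X₁), T₂ ∈ L(X₂), one has φ_p(λ₁(T₁)ρ₂(T₂)) = φ_{p₁}(T₁)·φ_{p₂}(T₂), i.e. the left operator from the first factor and the right operator from the second factor have factorizing expectation. -/
theorem LinearMap.apply_sub_apply_smul_eq_zero {R M : Type*} [CommRing R] [AddCommGroup M]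
    [Module R M] (φ : M →ₗ[R] R) {ξ : M} (hξ : φ ξ = 1) (x : M) :
    φ (x - φ x • ξ) = 0 := by
  rw [map_sub, map_smul, hξ, smul_eq_mul, mul_one, sub_self]

/-- A space with state-vector `(V, V°, ξ)` is encoded by its state functional `ψ`, with
`ψ ξ = 1` and `ker ψ = V°`, so that `φ_p(T) = ψ (T ξ)`; `Φ` gives the tensor words
`X°₁ ⊗ X°₂ ⊆ X°`, and `hlamact` is the action of `λ₁` on `X°₂`. -/
theorem expectation_factorizes_leftOp_rightOp_general
    {X₁ X₂ X : Type*}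
    [AddCommGroup X₁] [Module ℂ X₁] [AddCommGroup X₂] [Module ℂ X₂]
    [AddCommGroup X] [Module ℂ X]
    (ξ₁ : X₁) (ξ₂ : X₂) (ξ : X)
    (ψ₁ : X₁ →ₗ[ℂ] ℂ) (ψ₂ : X₂ →ₗ[ℂ] ℂ) (ψ : X →ₗ[ℂ] ℂ)
    (hψ₁ : ψ₁ ξ₁ = 1) (hψ₂ : ψ₂ ξ₂ = 1)
    (ι₁ : X₁ →ₗ[ℂ] X) (ι₂ : X₂ →ₗ[ℂ] X)
    (hι₂ξ : ι₂ ξ₂ = ξ)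
    (hψι₁ : ψ.comp ι₁ = ψ₁) (hψι₂ : ψ.comp ι₂ = ψ₂)
    (Φ : X₁ →ₗ[ℂ] X₂ →ₗ[ℂ] X)
    (hΦ : ∀ u v, ψ₁ u = 0 → ψ₂ v = 0 → ψ (Φ u v) = 0)
    (lam₁ : (X₁ →ₗ[ℂ] X₁) → (X →ₗ[ℂ] X)) (rho₂ : (X₂ →ₗ[ℂ] X₂) → (X →ₗ[ℂ] X))
    (hlamξ : ∀ T : X₁ →ₗ[ℂ] X₁, lam₁ T ξ = ι₁ (T ξ₁))
    (hrhoξ : ∀ T : X₂ →ₗ[ℂ] X₂, rho₂ T ξ = ι₂ (T ξ₂))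
    (hlamact : ∀ (T : X₁ →ₗ[ℂ] X₁) (v : X₂), ψ₂ v = 0 →
      lam₁ T (ι₂ v) = ψ₁ (T ξ₁) • ι₂ v + Φ (T ξ₁ - ψ₁ (T ξ₁) • ξ₁) v)
    (T₁ : X₁ →ₗ[ℂ] X₁) (T₂ : X₂ →ₗ[ℂ] X₂) :
    ψ ((lam₁ T₁ ∘ₗ rho₂ T₂) ξ) = ψ₁ (T₁ ξ₁) * ψ₂ (T₂ ξ₂) := by
  set v := T₂ ξ₂ - ψ₂ (T₂ ξ₂) • ξ₂
  have hv : ψ₂ v = 0 := ψ₂.apply_sub_apply_smul_eq_zero hψ₂ _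
  have hρ : rho₂ T₂ ξ = ψ₂ (T₂ ξ₂) • ξ + ι₂ v := by
    rw [hrhoξ, ← hι₂ξ, ← map_smul, ← map_add, add_sub_cancel]
  -- `λ₁(T₁)` sends the centred vector `ι₂ v` into `ℂ ι₂ v + X°₁ ⊗ X°₂ ⊆ X°`.
  have hcentred : ψ (lam₁ T₁ (ι₂ v)) = 0 := by
    rw [hlamact T₁ v hv, map_add, map_smul, ← LinearMap.comp_apply ψ ι₂, hψι₂, hv, smul_zero,
      zero_add]
    exact hΦ _ _ (ψ₁.apply_sub_apply_smul_eq_zero hψ₁ _) hv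
  calc ψ ((lam₁ T₁ ∘ₗ rho₂ T₂) ξ)
      = ψ₂ (T₂ ξ₂) * ψ (lam₁ T₁ ξ) + ψ (lam₁ T₁ (ι₂ v)) := by
        rw [LinearMap.comp_apply, hρ, map_add, map_smul, map_add, map_smul, smul_eq_mul]
    _ = ψ₁ (T₁ ξ₁) * ψ₂ (T₂ ξ₂) := by
        rw [hcentred, add_zero, hlamξ, ← LinearMap.comp_apply ψ ι₁, hψι₁, mul_comm]

/-- **Proposition 2.16 a), key computation** (Voiculescu, Free Probability for Pairs of
Faces I).  Let `(X, X°, ξ) = (X₁, X°₁, ξ₁) * (X₂, X°₂, ξ₂)` be the algebraic free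
product of two vector spaces with specified state-vector.  Then for `T₁ ∈ L(X₁)`,
`T₂ ∈ L(X₂)` the expectation factorizes:
`φ_p(λ₁(T₁) ρ₂(T₂)) = φ_{p₁}(T₁) · φ_{p₂}(T₂)`.

Here a state-vector space is encoded via its state functional `ψ` (`ψ ξ = 1`,
`ker ψ = X°`), so `φ_p(T) = ψ(T ξ)` and `φ_{pᵢ}(Tᵢ) = ψᵢ(Tᵢ ξᵢ)`.  The free-product
structure is encoded by the canonical embeddings `ι₁, ι₂` of `X₁ = ℂξ₁ ⊕ X°₁` and
`X₂ = ℂξ₂ ⊕ X°₂` into `X`, the bilinear map `Φ` giving the tensor words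
`X°₁ ⊗ X°₂ ⊆ X°`, and the action formulas of §1.9 for `λ₁` and `ρ₂`. -/
theorem expectation_factorizes_leftOp_rightOp
    {X₁ X₂ X : Type*}
    [AddCommGroup X₁] [Module ℂ X₁] [AddCommGroup X₂] [Module ℂ X₂]
    [AddCommGroup X] [Module ℂ X]
    (ξ₁ : X₁) (ξ₂ : X₂) (ξ : X)
    (ψ₁ : X₁ →ₗ[ℂ] ℂ) (ψ₂ : X₂ →ₗ[ℂ] ℂ) (ψ : X →ₗ[ℂ] ℂ)
    (hψ₁ : ψ₁ ξ₁ = 1) (hψ₂ : ψ₂ ξ₂ = 1) (hψ : ψ ξ = 1)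
    (ι₁ : X₁ →ₗ[ℂ] X) (ι₂ : X₂ →ₗ[ℂ] X)
    (hι₁ξ : ι₁ ξ₁ = ξ) (hι₂ξ : ι₂ ξ₂ = ξ)
    (hψι₁ : ψ.comp ι₁ = ψ₁) (hψι₂ : ψ.comp ι₂ = ψ₂)
    (Φ : X₁ →ₗ[ℂ] X₂ →ₗ[ℂ] X)
    (hΦ : ∀ u v, ψ₁ u = 0 → ψ₂ v = 0 → ψ (Φ u v) = 0)
    (lam₁ : (X₁ →ₗ[ℂ] X₁) → (X →ₗ[ℂ] X)) (rho₂ : (X₂ →ₗ[ℂ] X₂) → (X →ₗ[ℂ] X))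
    (hlamξ : ∀ T : X₁ →ₗ[ℂ] X₁, lam₁ T ξ = ι₁ (T ξ₁))
    (hrhoξ : ∀ T : X₂ →ₗ[ℂ] X₂, rho₂ T ξ = ι₂ (T ξ₂))
    (hlamact : ∀ (T : X₁ →ₗ[ℂ] X₁) (v : X₂), ψ₂ v = 0 →
      lam₁ T (ι₂ v) = ψ₁ (T ξ₁) • ι₂ v + Φ (T ξ₁ - ψ₁ (T ξ₁) • ξ₁) v)
    (T₁ : X₁ →ₗ[ℂ] X₁) (T₂ : X₂ →ₗ[ℂ] X₂) :
    ψ ((lam₁ T₁ ∘ₗ rho₂ T₂) ξ) = ψ₁ (T₁ ξ₁) * ψ₂ (T₂ ξ₂) :=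
  expectation_factorizes_leftOp_rightOp_general ξ₁ ξ₂ ξ ψ₁ ψ₂ ψ hψ₁ hψ₂ ι₁ ι₂ hι₂ξ hψι₁ hψι₂ Φ hΦ
    lam₁ rho₂ hlamξ hrhoξ hlamact T₁ T₂
end

section
/- (Bi-free algebraic central limit theorem, second-moment convergence of cumulant form.) Let z^{(n)}, n ∈ ℕ, be a bi-free sequence of two-faced families in (A, φ) indexed by K = I ⊔ J, with φ(z_k^{(n)}) = 0 for all k, n, with uniformly bounded moments sup_n |φ(z_{k₁}^{(n)} ⋯ z_{k_m}^{(n)})| < ∞ for every word k₁,…,k_m, and with N^{-1} Σ_{n≤N} φ(z_k^{(n)} z_l^{(n)}) → C_{kl}. Let S_{N,k} = N^{-1/2} Σ_{n≤N} z_k^{(n)}. Then for every word k₁…k_m, the bi-free cumulant satisfies lim_{N→∞} R_{k₁…k_m}(μ_{S_N}) = C_{k₁k₂} if m = 2, and = 0 if m ≠ 2; consequently the moments of S_N converge to those of the bi-free central limit distribution γ_C. -/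
/-!
By additivity along the bi-free sequence and homogeneity, the cumulant `R_w` of the normalized
sum `S_N` is `N^{-|w|/2} ∑_{n<N} R_w(z⁽ⁿ⁾)`. Since `R_w` is a polynomial in moments and the
moments are uniformly bounded, the summands are bounded, so this is `O(N^{1-|w|/2}) → 0` for
`|w| ≥ 3`; for `|w| = 1` it vanishes by centering, and for `|w| = 2` it is the Cesàro mean of the
covariances. Moments are polynomials in cumulants, hence converge to those of `γ_C`.
-/

open Filter Topology MvPolynomial

/-- The distribution (collection of joint moments) of a family `z` of
non-commutative random variables in `(A, φ)`, as a function on words. -/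
noncomputable def momentFn {A : Type*} [Ring A] [Algebra ℂ A] (φ : A →ₗ[ℂ] ℂ)
    {K : Type*} (z : K → A) : List K → ℂ :=
  fun w => φ (w.map z).prod

theorem MvPolynomial.exists_norm_eval_le {σ ι R : Type*} [SeminormedCommRing R]
    (P : MvPolynomial σ R) {f : ι → σ → R} (hf : ∀ s, ∃ D, ∀ i, ‖f i s‖ ≤ D) :
    ∃ B, ∀ i, ‖eval (f i) P‖ ≤ B := by
  induction P using MvPolynomial.induction_on with
  | C a => exact ⟨‖a‖, fun i => by simp⟩
  | add p q hp hq =>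
    obtain ⟨B₁, hB₁⟩ := hp
    obtain ⟨B₂, hB₂⟩ := hq
    refine ⟨B₁ + B₂, fun i => ?_⟩
    rw [map_add]
    exact (norm_add_le _ _).trans (add_le_add (hB₁ i) (hB₂ i))
  | mul_X p s hp =>
    obtain ⟨B, hB⟩ := hp
    obtain ⟨D, hD⟩ := hf s
    refine ⟨max B 0 * max D 0, fun i => ?_⟩
    rw [map_mul, eval_X]
    exact (norm_mul_le _ _).trans <| mul_le_mul ((hB i).trans (le_max_left _ _))
      ((hD i).trans (le_max_left _ _)) (norm_nonneg _) (le_max_right _ _)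

theorem norm_inv_natCast_mul_sum_range_le {a : ℕ → ℂ} {B : ℝ} (ha : ∀ n, ‖a n‖ ≤ B) (N : ℕ) :
    ‖(N : ℂ)⁻¹ * ∑ n ∈ Finset.range N, a n‖ ≤ B := by
  rcases N.eq_zero_or_pos with rfl | hN
  · simpa using (norm_nonneg _).trans (ha 0)
  have hsum : ‖∑ n ∈ Finset.range N, a n‖ ≤ N * B := by
    simpa using norm_sum_le_of_le (Finset.range N) fun n _ => ha n
  rw [norm_mul, norm_inv, Complex.norm_natCast, inv_mul_le_iff₀ (by exact_mod_cast hN)]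
  exact hsum

theorem inv_sqrt_natCast_sq (N : ℕ) : ((√N : ℝ) : ℂ)⁻¹ ^ 2 = (N : ℂ)⁻¹ := by
  rw [inv_pow, ← Complex.ofReal_pow, Real.sq_sqrt N.cast_nonneg, Complex.ofReal_natCast]

theorem tendsto_inv_sqrt_natCast : Tendsto (fun N : ℕ => ((√N : ℝ) : ℂ)⁻¹) atTop (𝓝 0) := by
  have h := tendsto_inv_atTop_zero.comp (Real.tendsto_sqrt_atTop.comp tendsto_natCast_atTop_atTop)
  simpa [Function.comp_def] using (Complex.continuous_ofReal.tendsto 0).comp h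

theorem tendsto_inv_sqrt_pow_mul_sum_range {a : ℕ → ℂ} {B : ℝ} (ha : ∀ n, ‖a n‖ ≤ B)
    {m : ℕ} (hm : 3 ≤ m) :
    Tendsto (fun N : ℕ => ((√N : ℝ) : ℂ)⁻¹ ^ m * ∑ n ∈ Finset.range N, a n) atTop (𝓝 0) := by
  have hsplit : ∀ N : ℕ, ((√N : ℝ) : ℂ)⁻¹ ^ m * ∑ n ∈ Finset.range N, a n =
      ((√N : ℝ) : ℂ)⁻¹ ^ (m - 2) * ((N : ℂ)⁻¹ * ∑ n ∈ Finset.range N, a n) := fun N => by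
    rw [← inv_sqrt_natCast_sq, ← mul_assoc, ← pow_add, Nat.sub_add_cancel (by omega)]
  simp_rw [hsplit]
  refine Tendsto.zero_mul_isBoundedUnder_le ?_
    (isBoundedUnder_of ⟨B, norm_inv_natCast_mul_sum_range_le ha⟩)
  simpa [zero_pow (show m - 2 ≠ 0 by omega)] using tendsto_inv_sqrt_natCast.pow (m - 2)

theorem tendsto_eval_of_tendsto_cumulant {K : Type*} {R : List K → (List K → ℂ) → ℂ}
    {ν : ℕ → List K → ℂ} {γ : List K → ℂ} (hν : ∀ N, ν N [] = 1) (hγ : γ [] = 1)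
    (hmom : ∀ w : List K, ∃ Q : MvPolynomial {s : List K // s.Sublist w ∧ s ≠ []} ℂ,
      ∀ ν : List K → ℂ, ν [] = 1 → ν w = eval (fun s => R s.1 ν) Q)
    (hR : ∀ s, s ≠ [] → Tendsto (fun N => R s (ν N)) atTop (𝓝 (R s γ))) (w : List K) :
    Tendsto (fun N => ν N w) atTop (𝓝 (γ w)) := by
  obtain ⟨Q, hQ⟩ := hmom w
  simp_rw [hQ _ (hν _), hQ γ hγ]
  exact ((continuous_eval Q).tendsto _).comp (tendsto_pi_nhds.2 fun s => hR s.1 s.2.2)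

section NormalizedSum

variable {K A : Type*} [Ring A] [Algebra ℂ A] {φ : A →ₗ[ℂ] ℂ}
  {R : List K → (List K → ℂ) → ℂ} {z : ℕ → K → A} {S : ℕ → K → A}

theorem momentFn_nil (hφ1 : φ 1 = 1) (x : K → A) : momentFn φ x [] = 1 := by
  simp [momentFn, hφ1]

theorem cumulant_normalizedSum
    (hscale : ∀ (c : ℂ) (x : K → A) (w : List K),
      R w (momentFn φ fun k => c • x k) = c ^ w.length * R w (momentFn φ x))
    (hadd : ∀ (w : List K) (N : ℕ), R w (momentFn φ fun k => ∑ n ∈ Finset.range N, z n k) =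
      ∑ n ∈ Finset.range N, R w (momentFn φ (z n)))
    (hS : ∀ N k, S N k = ((√N : ℝ) : ℂ)⁻¹ • ∑ n ∈ Finset.range N, z n k) (w : List K) (N : ℕ) :
    R w (momentFn φ (S N)) =
      ((√N : ℝ) : ℂ)⁻¹ ^ w.length * ∑ n ∈ Finset.range N, R w (momentFn φ (z n)) := by
  rw [show S N = _ from funext (hS N), hscale, hadd]

variable (hcent : ∀ n k, φ (z n k) = 0)
  (hcum : ∀ w N, R w (momentFn φ (S N)) =
    ((√N : ℝ) : ℂ)⁻¹ ^ w.length * ∑ n ∈ Finset.range N, R w (momentFn φ (z n)))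
include hcent hcum

theorem cumulant_pair_normalizedSum
    (hR2 : ∀ (x : K → A) (k l), R [k, l] (momentFn φ x) = φ (x k * x l) - φ (x k) * φ (x l))
    (k l : K) (N : ℕ) :
    R [k, l] (momentFn φ (S N)) = (N : ℂ)⁻¹ * ∑ n ∈ Finset.range N, φ (z n k * z n l) := by
  rw [hcum, show [k, l].length = 2 from rfl, inv_sqrt_natCast_sq]
  simp [hR2, hcent]

theorem cumulant_singleton_normalizedSum (hR1 : ∀ (x : K → A) (k), R [k] (momentFn φ x) = φ (x k))
    (k : K) (N : ℕ) : R [k] (momentFn φ (S N)) = 0 := by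
  simp [hcum, hR1, hcent]

theorem tendsto_cumulant_normalizedSum_of_length_ne_two
    (hR1 : ∀ (x : K → A) (k), R [k] (momentFn φ x) = φ (x k)) {w : List K}
    (hpoly : ∃ P : MvPolynomial {s : List K // s.Sublist w ∧ s ≠ []} ℂ,
      ∀ ν : List K → ℂ, R w ν = eval (fun s => ν s.1) P)
    (hbdd : ∀ w : List K, ∃ D : ℝ, ∀ n, ‖momentFn φ (z n) w‖ ≤ D)
    (hw : w ≠ []) (hw2 : w.length ≠ 2) :
    Tendsto (fun N => R w (momentFn φ (S N))) atTop (𝓝 0) := by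
  match w, hw, hw2 with
  | [k], _, _ =>
    simp [cumulant_singleton_normalizedSum hcent hcum hR1]
  | _ :: _ :: _ :: _, _, _ =>
    obtain ⟨P, hP⟩ := hpoly
    obtain ⟨B, hB⟩ := P.exists_norm_eval_le (f := fun n s => momentFn φ (z n) s.1)
      fun s => hbdd s.1
    simp_rw [hcum]
    exact tendsto_inv_sqrt_pow_mul_sum_range (fun n => hP _ ▸ hB n) (by simp)

end NormalizedSum

/-- **Theorem 7.9 (Bi-free algebraic central limit theorem)** (Voiculescu, Free
Probability for Pairs of Faces I).  Let `z⁽ⁿ⁾` be a bi-free sequence of two-faced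
families in `(A, φ)` indexed by `K = I ⊔ J`, centered, with uniformly bounded
moments, and with Cesàro-convergent covariances
`N⁻¹ ∑_{n<N} φ(z_k⁽ⁿ⁾ z_l⁽ⁿ⁾) → C_{kl}`.  With `S_{N,k} = N^{-1/2} ∑_{n<N} z_k⁽ⁿ⁾`,
the bi-free cumulants of `μ_{S_N}` satisfy
`R_{kl}(μ_{S_N}) → C_{kl}` and `R_{k₁…k_m}(μ_{S_N}) → 0` for `m ≠ 2`, and
consequently the moments of `S_N` converge to those of the bi-free central limit
distribution `γ_C`.

The bi-free cumulants `R` are given abstractly with their characterizing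
properties (Theorem 5.7, Lemma 7.2, Proposition 5.9): `R_k = φ(z_k)`,
`R_{kl} = φ(z_k z_l) − φ(z_k) φ(z_l)`, homogeneity under scaling, universal
polynomial dependence on the moments, and additivity along the bi-free sequence;
`γ_C` is the distribution whose cumulants of order `≠ 2` vanish and whose
second-order cumulants are `C`, and moments are universal polynomials in the
cumulants (Proposition 5.9). -/
theorem biFree_central_limit_theorem
    {I J : Type*} {A : Type*} [Ring A] [Algebra ℂ A]
    (φ : A →ₗ[ℂ] ℂ) (hφ1 : φ 1 = 1)
    (R : List (I ⊕ J) → (List (I ⊕ J) → ℂ) → ℂ)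
    (hR1 : ∀ (z : I ⊕ J → A) (k), R [k] (momentFn φ z) = φ (z k))
    (hR2 : ∀ (z : I ⊕ J → A) (k l),
      R [k, l] (momentFn φ z) = φ (z k * z l) - φ (z k) * φ (z l))
    (hscale : ∀ (c : ℂ) (z : I ⊕ J → A) (w : List (I ⊕ J)),
      R w (momentFn φ fun k => c • z k) = c ^ w.length * R w (momentFn φ z))
    (hpoly : ∀ w : List (I ⊕ J),
      ∃ P : MvPolynomial {s : List (I ⊕ J) // s.Sublist w ∧ s ≠ []} ℂ,
        ∀ ν : List (I ⊕ J) → ℂ, R w ν = MvPolynomial.eval (fun s => ν s.1) P)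
    (z : ℕ → I ⊕ J → A)
    (hcent : ∀ n k, φ (z n k) = 0)
    (hbdd : ∀ w : List (I ⊕ J), ∃ D : ℝ, ∀ n, ‖momentFn φ (z n) w‖ ≤ D)
    (C : I ⊕ J → I ⊕ J → ℂ)
    (hcov : ∀ k l, Filter.Tendsto
      (fun N : ℕ => (N : ℂ)⁻¹ * ∑ n ∈ Finset.range N, φ (z n k * z n l))
      Filter.atTop (nhds (C k l)))
    -- bi-freeness of the sequence `z⁽⁰⁾, z⁽¹⁾, …`, used through the additivity of
    -- the bi-free cumulants on bi-free families:
    (hadd : ∀ (w : List (I ⊕ J)) (N : ℕ),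
      R w (momentFn φ fun k => ∑ n ∈ Finset.range N, z n k) =
        ∑ n ∈ Finset.range N, R w (momentFn φ (z n)))
    (S : ℕ → I ⊕ J → A)
    (hS : ∀ N k, S N k = (((Real.sqrt N : ℝ) : ℂ))⁻¹ • ∑ n ∈ Finset.range N, z n k)
    (γ : List (I ⊕ J) → ℂ) (hγ1 : γ [] = 1)
    (hγ2 : ∀ k l, R [k, l] γ = C k l)
    (hγ0 : ∀ w : List (I ⊕ J), w ≠ [] → w.length ≠ 2 → R w γ = 0)
    (hmom : ∀ w : List (I ⊕ J),
      ∃ Q : MvPolynomial {s : List (I ⊕ J) // s.Sublist w ∧ s ≠ []} ℂ,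
        ∀ ν : List (I ⊕ J) → ℂ, ν [] = 1 →
          ν w = MvPolynomial.eval (fun s => R s.1 ν) Q) :
    (∀ k l, Filter.Tendsto (fun N => R [k, l] (momentFn φ (S N)))
      Filter.atTop (nhds (C k l))) ∧
    (∀ w : List (I ⊕ J), w ≠ [] → w.length ≠ 2 →
      Filter.Tendsto (fun N => R w (momentFn φ (S N))) Filter.atTop (nhds 0)) ∧
    (∀ w : List (I ⊕ J),
      Filter.Tendsto (fun N => momentFn φ (S N) w) Filter.atTop (nhds (γ w))) := by
  have hcum := cumulant_normalizedSum hscale hadd hS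
  have hpair : ∀ k l, Tendsto (fun N => R [k, l] (momentFn φ (S N))) atTop (𝓝 (C k l)) :=
    fun k l => by simpa only [cumulant_pair_normalizedSum hcent hcum hR2] using hcov k l
  have hrest : ∀ w : List (I ⊕ J), w ≠ [] → w.length ≠ 2 →
      Tendsto (fun N => R w (momentFn φ (S N))) atTop (𝓝 0) := fun w =>
    tendsto_cumulant_normalizedSum_of_length_ne_two hcent hcum hR1 (hpoly w) hbdd
  refine ⟨hpair, hrest, tendsto_eval_of_tendsto_cumulant (fun N => momentFn_nil hφ1 (S N)) hγ1 hmom ?_⟩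
  intro s hs
  by_cases hs2 : s.length = 2
  · obtain ⟨k, l, rfl⟩ : ∃ k l, s = [k, l] := List.length_eq_two.mp hs2
    exact hγ2 k l ▸ hpair k l
  · exact hγ0 s hs hs2 ▸ hrest s hs hs2
end

section
/- (Factorization of vacuum expectation across left and right creation sums on Fock space.) Let H = H₁ ⊕ H₂ be an orthogonal decomposition of a Hilbert space, and on the full Fock space T(H) let A be any polynomial in operators {l(g), l*(g) : g ∈ H₁} and B any polynomial in {r(h), r*(h) : h ∈ H₂}. Then ω(AB) = ω(A)·ω(B), where ω is the vacuum state. -/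
local notation "⟪" x ", " y "⟫" => @inner ℂ _ _ x y

/-!
The vacuum `Ω` is orthogonal to every tensor of positive length. Right operators with vectors
in `H₂` preserve the span of the tensors with all entries in `H₂`, so `BΩ = bΩ + ξ` with `ξ` a
combination of tensors of positive length whose last entry lies in `H₂`. Left operators with
vectors `g ∈ H₁` only act on the first entry, and `l*(g)` kills a one-letter tensor `h ∈ H₂`
since `g ⊥ h`; so they preserve the span of such `ξ`. Hence `Aξ ⊥ Ω`, and
`⟪ABΩ, Ω⟫ = ⟪A(bΩ), Ω⟫ = ω(A) ω(B)`.
-/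

theorem ContinuousLinearMap.mapsTo_span_of_mem_adjoin {R M : Type*} [CommRing R]
    [TopologicalSpace M] [AddCommGroup M] [Module R M] [ContinuousConstSMul R M]
    [IsTopologicalAddGroup M] {s : Set (M →L[R] M)} {S : Set M}
    (hs : ∀ T ∈ s, Set.MapsTo T S (Submodule.span R S)) {T : M →L[R] M}
    (hT : T ∈ Algebra.adjoin R s) :
    Set.MapsTo T (Submodule.span R S) (Submodule.span R S) := by
  induction hT using Algebra.adjoin_induction with
  | mem T hT =>
    exact fun x hx ↦ (Submodule.span_le (p := (Submodule.span R S).comap (T : M →ₗ[R] M))).mpr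
      (hs T hT) hx
  | algebraMap c => exact fun x hx ↦ Submodule.smul_mem _ c hx
  | add T U _ _ hT hU => exact fun x hx ↦ Submodule.add_mem _ (hT hx) (hU hx)
  | mul T U _ _ hT hU => exact hT.comp hU

theorem eq_of_forall_inner_eq_of_dense_span {E : Type*} [NormedAddCommGroup E]
    [InnerProductSpace ℂ E] {s : Set E} (hs : Dense (Submodule.span ℂ s : Set E)) {x y : E}
    (h : ∀ z ∈ s, ⟪x, z⟫ = ⟪y, z⟫) : x = y :=
  ext_inner_right ℂ fun z ↦ congrArg (· z)
    (ContinuousLinearMap.ext_on (f := innerSL ℂ x) (g := innerSL ℂ y) hs h)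

namespace FockSpace

variable {H F : Type*} {e : (n : ℕ) → (Fin n → H) → F}

def tensorsIn [AddCommMonoid H] [Module ℂ H] (e : (n : ℕ) → (Fin n → H) → F)
    (K : Submodule ℂ H) : Set F :=
  {x | ∃ n, ∃ v : Fin n → H, (∀ i, v i ∈ K) ∧ e n v = x}

def tensorsEndingIn [AddCommMonoid H] [Module ℂ H] (e : (n : ℕ) → (Fin n → H) → F)
    (K : Submodule ℂ H) : Set F :=
  {x | ∃ n, ∃ v : Fin (n + 1) → H, v (Fin.last n) ∈ K ∧ e (n + 1) v = x}

theorem tensorsIn_subset_insert_tensorsEndingIn [AddCommMonoid H] [Module ℂ H]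
    (K : Submodule ℂ H) :
    tensorsIn e K ⊆ insert (e 0 Fin.elim0) (tensorsEndingIn e K) := by
  rintro _ ⟨_ | n, v, hv, rfl⟩
  · exact .inl (congrArg _ (Subsingleton.elim _ _))
  · exact .inr ⟨n, v, hv _, rfl⟩

section

variable [NormedAddCommGroup F] [InnerProductSpace ℂ F]

theorem inner_vacuum_eq_zero_of_mem_span_tensorsEndingIn [AddCommMonoid H] [Module ℂ H]
    {K : Submodule ℂ H}
    (horth : ∀ m n : ℕ, m ≠ n → ∀ (v : Fin m → H) (w : Fin n → H), ⟪e m v, e n w⟫ = 0)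
    {x : F} (hx : x ∈ Submodule.span ℂ (tensorsEndingIn e K)) : ⟪x, e 0 Fin.elim0⟫ = 0 := by
  refine Submodule.mem_orthogonal_singleton_iff_inner_left.mp (Submodule.span_le.mpr ?_ hx)
  rintro _ ⟨n, v, -, rfl⟩
  exact Submodule.mem_orthogonal_singleton_iff_inner_left.mpr (horth _ _ n.succ_ne_zero _ _)

theorem adjoint_apply_vacuum_eq_zero {T Ts : F → F}
    (hdense : Dense (Submodule.span ℂ {x : F | ∃ n v, e n v = x} : Set F))
    (horth : ∀ m n : ℕ, m ≠ n → ∀ (v : Fin m → H) (w : Fin n → H), ⟪e m v, e n w⟫ = 0)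
    (hT : ∀ n v, ∃ w : Fin (n + 1) → H, T (e n v) = e (n + 1) w)
    (hTs : ∀ u w, ⟪Ts u, w⟫ = ⟪u, T w⟫) (v : Fin 0 → H) : Ts (e 0 v) = 0 :=
  eq_of_forall_inner_eq_of_dense_span hdense fun _ ⟨n, w, hw⟩ ↦ by
    obtain ⟨w', hw'⟩ := hT n w
    rw [← hw, hTs, hw', inner_zero_left, horth 0 (n + 1) n.succ_ne_zero.symm]

variable [NormedAddCommGroup H] [InnerProductSpace ℂ H]

structure IsFockTensorMap (e : (n : ℕ) → (Fin n → H) → F) : Prop where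
  inner_eq_prod : ∀ (n : ℕ) (v w : Fin n → H), ⟪e n v, e n w⟫ = ∏ i, ⟪v i, w i⟫
  inner_eq_zero_of_ne :
    ∀ m n : ℕ, m ≠ n → ∀ (v : Fin m → H) (w : Fin n → H), ⟪e m v, e n w⟫ = 0
  dense_span : Dense (Submodule.span ℂ {x : F | ∃ n v, e n v = x} : Set F)

theorem leftAnnihilation_apply_succ {L Ls : F → F} {g : H} (he : IsFockTensorMap e)
    (hL : ∀ n v, L (e n v) = e (n + 1) (Fin.cons g v))
    (hLs : ∀ u w, ⟪Ls u, w⟫ = ⟪u, L w⟫) (n : ℕ) (v : Fin (n + 1) → H) :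
    Ls (e (n + 1) v) = ⟪g, v 0⟫ • e n (Fin.tail v) :=
  eq_of_forall_inner_eq_of_dense_span he.dense_span fun _ ⟨m, w, hw⟩ ↦ by
    rw [← hw, hLs, hL, inner_smul_left, inner_conj_symm]
    rcases eq_or_ne m n with rfl | hmn
    · rw [he.inner_eq_prod, he.inner_eq_prod, Fin.prod_univ_succ]
      rfl
    · rw [he.inner_eq_zero_of_ne _ _ (by omega), he.inner_eq_zero_of_ne _ _ hmn.symm, mul_zero]

theorem rightAnnihilation_apply_succ {R Rs : F → F} {h : H} (he : IsFockTensorMap e)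
    (hR : ∀ n v, R (e n v) = e (n + 1) (Fin.snoc v h))
    (hRs : ∀ u w, ⟪Rs u, w⟫ = ⟪u, R w⟫) (n : ℕ) (v : Fin (n + 1) → H) :
    Rs (e (n + 1) v) = ⟪h, v (Fin.last n)⟫ • e n (Fin.init v) :=
  eq_of_forall_inner_eq_of_dense_span he.dense_span fun _ ⟨m, w, hw⟩ ↦ by
    rw [← hw, hRs, hR, inner_smul_left, inner_conj_symm]
    rcases eq_or_ne m n with rfl | hmn
    · rw [he.inner_eq_prod, he.inner_eq_prod, Fin.prod_univ_castSucc, mul_comm]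
      simp only [Fin.snoc_castSucc, Fin.snoc_last, Fin.init]
    · rw [he.inner_eq_zero_of_ne _ _ (by omega), he.inner_eq_zero_of_ne _ _ hmn.symm, mul_zero]

theorem mapsTo_span_tensorsIn (K : Submodule ℂ H) (he : IsFockTensorMap e)
    {r rs : H → F →L[ℂ] F}
    (hr : ∀ (h : H) (n) (v : Fin n → H), r h (e n v) = e (n + 1) (Fin.snoc v h))
    (hrs : ∀ h u w, ⟪rs h u, w⟫ = ⟪u, r h w⟫) {B : F →L[ℂ] F}
    (hB : B ∈ Algebra.adjoin ℂ
      ({T | ∃ h ∈ K, T = r h} ∪ {T | ∃ h ∈ K, T = rs h} : Set (F →L[ℂ] F))) :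
    Set.MapsTo B (Submodule.span ℂ (tensorsIn e K)) (Submodule.span ℂ (tensorsIn e K)) := by
  refine ContinuousLinearMap.mapsTo_span_of_mem_adjoin ?_ hB
  rintro _ (⟨h, hh, rfl⟩ | ⟨h, hh, rfl⟩) _ ⟨n, v, hv, rfl⟩
  · refine Submodule.subset_span ⟨n + 1, Fin.snoc v h, fun i ↦ ?_, (hr h n v).symm⟩
    induction i using Fin.lastCases <;> simp [hh, hv]
  · cases n with
    | zero =>
      rw [adjoint_apply_vacuum_eq_zero he.dense_span he.inner_eq_zero_of_ne (fun n v ↦ ⟨_, hr h n v⟩) (hrs h)]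
      exact zero_mem _
    | succ n =>
      rw [rightAnnihilation_apply_succ he (hr h) (hrs h)]
      exact Submodule.smul_mem _ _ (Submodule.subset_span ⟨n, _, fun i ↦ hv _, rfl⟩)

theorem mapsTo_span_tensorsEndingIn {K K' : Submodule ℂ H}
    (hKK' : ∀ g ∈ K', ∀ h ∈ K, ⟪g, h⟫ = 0) (he : IsFockTensorMap e)
    {l ls : H → F →L[ℂ] F}
    (hl : ∀ (g : H) (n) (v : Fin n → H), l g (e n v) = e (n + 1) (Fin.cons g v))
    (hls : ∀ g u w, ⟪ls g u, w⟫ = ⟪u, l g w⟫) {A : F →L[ℂ] F}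
    (hA : A ∈ Algebra.adjoin ℂ
      ({T | ∃ g ∈ K', T = l g} ∪ {T | ∃ g ∈ K', T = ls g} : Set (F →L[ℂ] F))) :
    Set.MapsTo A (Submodule.span ℂ (tensorsEndingIn e K))
      (Submodule.span ℂ (tensorsEndingIn e K)) := by
  refine ContinuousLinearMap.mapsTo_span_of_mem_adjoin ?_ hA
  rintro _ (⟨g, hg, rfl⟩ | ⟨g, hg, rfl⟩) _ ⟨n, v, hv, rfl⟩
  · rw [hl]
    exact Submodule.subset_span ⟨n + 1, Fin.cons g v, by rwa [Fin.cons_last], rfl⟩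
  · rw [leftAnnihilation_apply_succ he (hl g) (hls g)]
    cases n with
    | zero => rw [hKK' g hg (v 0) hv, zero_smul]; exact zero_mem _
    | succ n =>
      refine Submodule.smul_mem _ _ (Submodule.subset_span ⟨n, Fin.tail v, ?_, rfl⟩)
      rwa [Fin.tail, Fin.succ_last]

end

end FockSpace

open FockSpace in
theorem fock_vacuum_expectation_factorizes_general
    {H F : Type*}
    [NormedAddCommGroup H] [InnerProductSpace ℂ H]
    [NormedAddCommGroup F] [InnerProductSpace ℂ F]
    (H₁ H₂ : Submodule ℂ H)
    (horthHH : ∀ g ∈ H₁, ∀ h ∈ H₂, ⟪g, h⟫ = 0)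
    (e : (n : ℕ) → (Fin n → H) → F)
    (hinner : ∀ (n : ℕ) (v w : Fin n → H), ⟪e n v, e n w⟫ = ∏ i, ⟪v i, w i⟫)
    (horth : ∀ m n : ℕ, m ≠ n → ∀ (v : Fin m → H) (w : Fin n → H), ⟪e m v, e n w⟫ = 0)
    (hdense : Dense (Submodule.span ℂ {x : F | ∃ n v, e n v = x} : Set F))
    (l r ls rs : H → F →L[ℂ] F)
    (hl : ∀ (g : H) (n) (v : Fin n → H), l g (e n v) = e (n + 1) (Fin.cons g v))
    (hr : ∀ (h : H) (n) (v : Fin n → H), r h (e n v) = e (n + 1) (Fin.snoc v h))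
    (hls : ∀ g u w, ⟪ls g u, w⟫ = ⟪u, l g w⟫)
    (hrs : ∀ h u w, ⟪rs h u, w⟫ = ⟪u, r h w⟫)
    (A B : F →L[ℂ] F)
    (hA : A ∈ Algebra.adjoin ℂ
      ({T | ∃ g ∈ H₁, T = l g} ∪ {T | ∃ g ∈ H₁, T = ls g} : Set (F →L[ℂ] F)))
    (hB : B ∈ Algebra.adjoin ℂ
      ({T | ∃ h ∈ H₂, T = r h} ∪ {T | ∃ h ∈ H₂, T = rs h} : Set (F →L[ℂ] F))) :
    ⟪(A * B) (e 0 Fin.elim0), e 0 Fin.elim0⟫ =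
      ⟪A (e 0 Fin.elim0), e 0 Fin.elim0⟫ * ⟪B (e 0 Fin.elim0), e 0 Fin.elim0⟫ := by
  have he : IsFockTensorMap e := ⟨hinner, horth, hdense⟩
  set Ω := e 0 Fin.elim0
  have hΩΩ : ⟪Ω, Ω⟫ = 1 := by simpa using hinner 0 Fin.elim0 Fin.elim0
  have hΩ : Ω ∈ Submodule.span ℂ (tensorsIn e H₂) :=
    Submodule.subset_span ⟨0, Fin.elim0, fun i ↦ i.elim0, rfl⟩
  obtain ⟨b, ξ, hξ, hBΩ⟩ := Submodule.mem_span_insert.mp <|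
    Submodule.span_mono (tensorsIn_subset_insert_tensorsEndingIn H₂)
      (mapsTo_span_tensorsIn H₂ he hr hrs hB hΩ)
  have hAξ := mapsTo_span_tensorsEndingIn horthHH he hl hls hA hξ
  rw [mul_apply_eq_comp, hBΩ, map_add, map_smul, inner_add_left, inner_add_left,
    inner_smul_left, inner_smul_left, hΩΩ,
    inner_vacuum_eq_zero_of_mem_span_tensorsEndingIn horth hξ,
    inner_vacuum_eq_zero_of_mem_span_tensorsEndingIn horth hAξ]
  ring

/-- **Example 6.3 / Proposition 2.16 a) on the Fock space** (Voiculescu, Free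
Probability for Pairs of Faces I).  Let `H = H₁ ⊕ H₂` be an orthogonal
decomposition of a Hilbert space.  On the full Fock space `T(H)`, for any
polynomial `A` in the left creation/annihilation operators `{l(g), l*(g) : g ∈ H₁}`
and any polynomial `B` in the right creation/annihilation operators
`{r(h), r*(h) : h ∈ H₂}`, the vacuum expectation factorizes:
`ω(AB) = ω(A) ω(B)`.

The Fock space is encoded by the elementary-tensor map `e` (with `Ω = e 0` the
vacuum), dense total span and tensor inner products; `l(g)` prepends, `r(h)`
appends, and `ls = l*`, `rs = r*` are the adjoints. -/
theorem fock_vacuum_expectation_factorizes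
    {H F : Type*}
    [NormedAddCommGroup H] [InnerProductSpace ℂ H]
    [NormedAddCommGroup F] [InnerProductSpace ℂ F] [CompleteSpace F]
    (H₁ H₂ : Submodule ℂ H)
    (horthHH : ∀ g ∈ H₁, ∀ h ∈ H₂, ⟪g, h⟫ = 0) (hsup : H₁ ⊔ H₂ = ⊤)
    (e : (n : ℕ) → (Fin n → H) → F)
    (hinner : ∀ (n : ℕ) (v w : Fin n → H), ⟪e n v, e n w⟫ = ∏ i, ⟪v i, w i⟫)
    (horth : ∀ m n : ℕ, m ≠ n → ∀ (v : Fin m → H) (w : Fin n → H), ⟪e m v, e n w⟫ = 0)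
    (hdense : Dense (Submodule.span ℂ {x : F | ∃ n v, e n v = x} : Set F))
    (l r ls rs : H → F →L[ℂ] F)
    (hl : ∀ (g : H) (n) (v : Fin n → H), l g (e n v) = e (n + 1) (Fin.cons g v))
    (hr : ∀ (h : H) (n) (v : Fin n → H), r h (e n v) = e (n + 1) (Fin.snoc v h))
    (hls : ∀ g u w, ⟪ls g u, w⟫ = ⟪u, l g w⟫)
    (hrs : ∀ h u w, ⟪rs h u, w⟫ = ⟪u, r h w⟫)
    (A B : F →L[ℂ] F)
    (hA : A ∈ Algebra.adjoin ℂ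
      ({T | ∃ g ∈ H₁, T = l g} ∪ {T | ∃ g ∈ H₁, T = ls g} : Set (F →L[ℂ] F)))
    (hB : B ∈ Algebra.adjoin ℂ
      ({T | ∃ h ∈ H₂, T = r h} ∪ {T | ∃ h ∈ H₂, T = rs h} : Set (F →L[ℂ] F))) :
    ⟪(A * B) (e 0 Fin.elim0), e 0 Fin.elim0⟫ =
      ⟪A (e 0 Fin.elim0), e 0 Fin.elim0⟫ * ⟪B (e 0 Fin.elim0), e 0 Fin.elim0⟫ :=
  fock_vacuum_expectation_factorizes_general H₁ H₂ horthHH e hinner horth hdense l r ls rs hl hr hls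
    hrs A B hA hB
end
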